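/- arXiv:1207.6802 — 2 statements merged into one kernel-verified Lean document; each statement's English description precedes it below -/
import Mathlib

section
/- A subset V of a topological space X is a cozero-set if and only if V is U-representable, i.e., there exists a sequence (U_n)_{n≥1} with V = ⋃_n U_n, U_n ⊆ U_{n+1}, U_{2n-1} a zero-set and U_{2n} a cozero-set for every n. -/
/-- `A` is a zero-set: `A = f ⁻¹' {0}` for some continuous `f : X → [0,1]`. -/
def IsZeroSetD {X : Type*} [TopologicalSpace X] (A : Set X) : Prop :=
  ∃ f : C(X, ℝ), (∀ x, f x ∈ Set.Icc (0 : ℝ) 1) ∧ A = f ⁻¹' {0}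

/-- `A` is a cozero-set: the complement of a zero-set. -/
def IsCozSetD {X : Type*} [TopologicalSpace X] (A : Set X) : Prop :=
  ∃ f : C(X, ℝ), (∀ x, f x ∈ Set.Icc (0 : ℝ) 1) ∧ A = (f ⁻¹' {0})ᶜ

/-!
A cozero-set `coz f` with `0 ≤ f ≤ 1` is the increasing union of the alternating level sets
`{f ≥ 1/k} ⊆ {f > 1/(k+1)} ⊆ {f ≥ 1/(k+1)} ⊆ ⋯`. Conversely, in a U-representation the even
terms alone exhaust `V`, and a countable union of cozero-sets `coz g_n` is the cozero-set of
`∑ 2^{-(n+1)} g_n`.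
-/

open Set

section Series

lemma summable_inv_two_pow_succ : Summable fun n : ℕ => (2⁻¹ : ℝ) ^ (n + 1) :=
  (summable_geometric_of_lt_one (by norm_num) (by norm_num)).comp_injective (add_left_injective 1)

lemma tsum_inv_two_pow_succ : ∑' n : ℕ, (2⁻¹ : ℝ) ^ (n + 1) = 1 := by
  simp only [pow_succ, tsum_mul_right, tsum_geometric_inv_two]
  norm_num

variable {a : ℕ → ℝ}

lemma summable_inv_two_pow_succ_mul (ha : ∀ n, a n ∈ Icc (0 : ℝ) 1) :
    Summable fun n => (2⁻¹ : ℝ) ^ (n + 1) * a n :=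
  Summable.of_nonneg_of_le (fun n => mul_nonneg (by positivity) (ha n).1)
    (fun n => mul_le_of_le_one_right (by positivity) (ha n).2)
    summable_inv_two_pow_succ

lemma tsum_inv_two_pow_succ_mul_mem_Icc (ha : ∀ n, a n ∈ Icc (0 : ℝ) 1) :
    ∑' n, (2⁻¹ : ℝ) ^ (n + 1) * a n ∈ Icc (0 : ℝ) 1 := by
  refine ⟨tsum_nonneg fun n => mul_nonneg (by positivity) (ha n).1, ?_⟩
  rw [← tsum_inv_two_pow_succ]
  exact (summable_inv_two_pow_succ_mul ha).tsum_le_tsum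
    (fun n => mul_le_of_le_one_right (by positivity) (ha n).2)
    summable_inv_two_pow_succ

lemma tsum_inv_two_pow_succ_mul_eq_zero_iff (ha : ∀ n, a n ∈ Icc (0 : ℝ) 1) :
    ∑' n, (2⁻¹ : ℝ) ^ (n + 1) * a n = 0 ↔ ∀ n, a n = 0 := by
  rw [← (summable_inv_two_pow_succ_mul ha).hasSum_iff,
    hasSum_zero_iff_of_nonneg fun n => mul_nonneg (by positivity) (ha n).1, funext_iff]
  simp

end Series

section ZeroSets

variable {X : Type*} [TopologicalSpace X]

lemma isCozSetD_iff_isZeroSetD_compl {A : Set X} : IsCozSetD A ↔ IsZeroSetD Aᶜ :=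
  exists_congr fun _ => and_congr_right fun _ => eq_compl_comm.trans eq_comm

lemma isZeroSetD_preimage_zero (f : C(X, ℝ)) : IsZeroSetD (f ⁻¹' {0}) := by
  refine ⟨⟨fun x => min |f x| 1, by fun_prop⟩,
    fun x => ⟨le_min (abs_nonneg _) zero_le_one, min_le_right _ _⟩, ?_⟩
  ext x
  simp +contextual [min_eq_iff]

lemma isZeroSetD_preimage_Ici (f : C(X, ℝ)) (c : ℝ) : IsZeroSetD (f ⁻¹' Ici c) := by
  convert isZeroSetD_preimage_zero ⟨fun x => max (c - f x) 0, by fun_prop⟩ using 1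
  ext x
  simp

lemma isCozSetD_preimage_Ioi (f : C(X, ℝ)) (c : ℝ) : IsCozSetD (f ⁻¹' Ioi c) := by
  rw [isCozSetD_iff_isZeroSetD_compl, ← preimage_compl, compl_Ioi]
  convert isZeroSetD_preimage_Ici (-f) (-c) using 1
  ext x
  simp

theorem IsCozSetD.iUnion {U : ℕ → Set X} (hU : ∀ n, IsCozSetD (U n)) :
    IsCozSetD (⋃ n, U n) := by
  choose g hg hgU using hU
  have hcont : Continuous fun x => ∑' n, (2⁻¹ : ℝ) ^ (n + 1) * g n x :=
    continuous_tsum (fun n => continuous_const.mul (g n).continuous) summable_inv_two_pow_succ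
      fun n x => by
        rw [norm_mul, Real.norm_of_nonneg (by positivity : (0 : ℝ) ≤ 2⁻¹ ^ (n + 1))]
        exact mul_le_of_le_one_right (by positivity)
          (abs_le.2 ⟨by linarith [(hg n x).1], (hg n x).2⟩)
  refine ⟨⟨_, hcont⟩, fun x => tsum_inv_two_pow_succ_mul_mem_Icc (hg · x), ?_⟩
  ext x
  simp only [mem_iUnion, hgU, mem_compl_iff, mem_preimage, mem_singleton_iff,
    ContinuousMap.coe_mk, tsum_inv_two_pow_succ_mul_eq_zero_iff (hg · x), not_forall]

end ZeroSets

section LevelSets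

variable {X : Type*}

/-- `levelSeq f (2k-1) = {f ≥ 1/k}` and `levelSeq f (2k) = {f > 1/(k+1)}`. -/
def levelSeq (f : X → ℝ) (n : ℕ) : Set X :=
  if Even n then f ⁻¹' Ioi ((n / 2 : ℕ) + 1 : ℝ)⁻¹ else f ⁻¹' Ici ((n / 2 : ℕ) + 1 : ℝ)⁻¹

lemma levelSeq_subset_succ (f : X → ℝ) (n : ℕ) : levelSeq f n ⊆ levelSeq f (n + 1) := by
  rcases Nat.even_or_odd n with hn | hn
  · have hdiv : (n + 1) / 2 = n / 2 := by rcases hn with ⟨k, rfl⟩; omega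
    simp only [levelSeq, if_pos hn, if_neg (Nat.not_even_iff_odd.2 hn.add_one), hdiv]
    exact preimage_mono Ioi_subset_Ici_self
  · have hdiv : (n + 1) / 2 = n / 2 + 1 := by rcases hn with ⟨k, rfl⟩; omega
    simp only [levelSeq, if_neg (Nat.not_even_iff_odd.2 hn), if_pos hn.add_one, hdiv]
    refine preimage_mono (Ici_subset_Ioi.2 (inv_strictAnti₀ (by positivity) ?_))
    push_cast
    linarith

lemma levelSeq_subset_preimage_Ioi_zero (f : X → ℝ) (n : ℕ) : levelSeq f n ⊆ f ⁻¹' Ioi 0 := by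
  unfold levelSeq
  split_ifs
  · exact preimage_mono (Ioi_subset_Ioi (by positivity))
  · exact preimage_mono (Ici_subset_Ioi.2 (by positivity))

lemma iUnion_levelSeq (f : X → ℝ) : ⋃ n, ⋃ (_ : 1 ≤ n), levelSeq f n = f ⁻¹' Ioi 0 := by
  refine subset_antisymm (iUnion₂_subset fun n _ => levelSeq_subset_preimage_Ioi_zero f n)
    fun x (hx : 0 < f x) => ?_
  obtain ⟨k, hk⟩ := exists_nat_one_div_lt hx
  have hodd : ¬Even (2 * k + 1) := Nat.not_even_iff_odd.2 (odd_two_mul_add_one k)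
  have hdiv : (2 * k + 1) / 2 = k := by omega
  refine mem_iUnion₂.2 ⟨2 * k + 1, by omega, ?_⟩
  simp only [levelSeq, if_neg hodd, hdiv, mem_preimage, mem_Ici]
  simpa using hk.le

end LevelSets

lemma biUnion_one_le_eq_iUnion_two_mul_succ {α : Type*} {U : ℕ → Set α}
    (hU : ∀ n, 1 ≤ n → U n ⊆ U (n + 1)) :
    ⋃ n, ⋃ (_ : 1 ≤ n), U n = ⋃ n, U (2 * (n + 1)) := by
  have hmono : Monotone fun k => U (k + 1) := monotone_nat_of_le_succ fun k => hU (k + 1) (by omega)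
  refine subset_antisymm (iUnion₂_subset fun n hn => ?_)
    (iUnion_subset fun n => subset_biUnion_of_mem (u := U) (by omega : 1 ≤ 2 * (n + 1)))
  obtain ⟨m, rfl⟩ := Nat.exists_eq_add_of_le' hn
  exact (hmono (by omega : m ≤ 2 * m + 1)).trans (subset_iUnion_of_subset m le_rfl)

/-- A subset `V` of a space `X` is a cozero-set iff it is U-representable:
`V = ⋃_{n ≥ 1} U n` with `U n ⊆ U (n+1)`, the odd-indexed `U (2n-1)` zero-sets and
the even-indexed `U (2n)` cozero-sets. -/
theorem stmt_10 {X : Type*} [TopologicalSpace X] (V : Set X) :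
    IsCozSetD V ↔
      ∃ U : ℕ → Set X, V = (⋃ n, ⋃ (_ : 1 ≤ n), U n) ∧
        (∀ n, 1 ≤ n → U n ⊆ U (n + 1)) ∧
        (∀ n, 1 ≤ n → IsZeroSetD (U (2 * n - 1))) ∧
        (∀ n, 1 ≤ n → IsCozSetD (U (2 * n))) := by
  constructor
  · rintro ⟨f, hf, rfl⟩
    refine ⟨levelSeq f, ?_, fun n _ => levelSeq_subset_succ f n, fun n hn => ?_, fun n _ => ?_⟩
    · rw [iUnion_levelSeq]
      ext x
      simp [(hf x).1.lt_iff_ne, eq_comm]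
    · have hodd : ¬Even (2 * n - 1) := Nat.not_even_iff_odd.2 ⟨n - 1, by omega⟩
      rw [levelSeq, if_neg hodd]
      exact isZeroSetD_preimage_Ici f _
    · rw [levelSeq, if_pos (even_two_mul n)]
      exact isCozSetD_preimage_Ioi f _
  · rintro ⟨U, rfl, hmono, -, hcoz⟩
    rw [biUnion_one_le_eq_iUnion_two_mul_succ hmono]
    exact IsCozSetD.iUnion fun n => hcoz (n + 1) n.succ_pos
end

section
/- Let X be a compact subspace of Σ*([0,1], Γ) = {x ∈ [0,1]^Γ : for every ε > 0, the set {γ : x(γ) ≥ ε} is finite}. For r ∈ (0,1) and γ ∈ Γ, let V_{r,γ} = {x ∈ X : x(γ) > r}. Then for each fixed r, the family {V_{r,γ} : γ ∈ Γ} is strongly point-finite, i.e., any infinite subfamily contains a finite subfamily with empty intersection. -/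
/-!
Suppose an infinite set `Λ` of coordinates had all finite intersections of the sets
`{x ∈ X | r < x γ}`, `γ ∈ Λ`, nonempty. The closed sets `{x | r ≤ x γ}` then have the finite
intersection property on the compact set `X`, so some `x ∈ X` satisfies `r ≤ x γ` for every
`γ ∈ Λ`. This contradicts the finiteness of `{γ | r ≤ x γ}` for points of `Σ*([0,1], Γ)`.
-/

def StronglyPointFinite {α : Type*} (μ : Set (Set α)) : Prop :=
  ∀ ν ⊆ μ, ν.Infinite → ∃ ν' ⊆ ν, ν'.Finite ∧ ⋂₀ ν' = ∅

theorem stronglyPointFinite_range {α ι : Type*} {U : ι → Set α}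
    (h : ∀ Λ : Set ι, Λ.Infinite → ∃ s ⊆ Λ, s.Finite ∧ ⋂ i ∈ s, U i = ∅) :
    StronglyPointFinite (Set.range U) := by
  intro ν hν hinf
  have hΛ : (U ⁻¹' ν).Infinite := by
    refine Set.Infinite.of_image U ?_
    rwa [Set.image_preimage_eq_of_subset hν]
  obtain ⟨s, hsΛ, hs, hempty⟩ := h _ hΛ
  exact ⟨U '' s, (Set.image_mono hsΛ).trans (Set.image_preimage_subset U ν), hs.image U,
    by rwa [Set.sInter_image]⟩

theorem IsCompact.exists_forall_le_of_forall_finset_lt {α ι β : Type*} [TopologicalSpace α]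
    [TopologicalSpace β] [LinearOrder β] [ClosedIciTopology β] {X : Set α} (hX : IsCompact X)
    {f : ι → α → β} (hf : ∀ i, Continuous (f i)) {r : β}
    (h : ∀ s : Finset ι, ∃ x ∈ X, ∀ i ∈ s, r < f i x) :
    ∃ x ∈ X, ∀ i, r ≤ f i x := by
  obtain ⟨x, hxX, hx⟩ := hX.inter_iInter_nonempty (fun i => f i ⁻¹' Set.Ici r)
    (fun i => isClosed_Ici.preimage (hf i)) fun s => by
      obtain ⟨x, hxX, hx⟩ := h s
      exact ⟨x, hxX, Set.mem_iInter₂.2 fun i hi => (hx i hi).le⟩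
  exact ⟨x, hxX, Set.mem_iInter.1 hx⟩

theorem exists_finite_biInter_eq_empty_of_isCompact {Γ : Type*} {X : Set (Γ → ℝ)}
    (hX : IsCompact X) {r : ℝ} (hfin : ∀ x ∈ X, {γ | r ≤ x γ}.Finite) {Λ : Set Γ}
    (hΛ : Λ.Infinite) : ∃ s ⊆ Λ, s.Finite ∧ ⋂ γ ∈ s, {x ∈ X | r < x γ} = ∅ := by
  by_contra! h
  obtain ⟨x, hxX, hx⟩ := hX.exists_forall_le_of_forall_finset_lt
    (f := fun (γ : Λ) (x : Γ → ℝ) => x γ) (fun γ => continuous_apply _) (r := r) fun s => by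
      -- adjoining some `γ₀ ∈ Λ` keeps the point in `X` even when `s = ∅`
      obtain ⟨γ₀, hγ₀⟩ := hΛ.nonempty
      obtain ⟨x, hx⟩ := h (insert γ₀ (Subtype.val '' (s : Set Λ)))
        (Set.insert_subset hγ₀ (by simp)) ((s.finite_toSet.image _).insert γ₀)
      rw [Set.mem_iInter₂] at hx
      exact ⟨x, (hx γ₀ (Set.mem_insert _ _)).1,
        fun i hi => (hx i (Set.mem_insert_of_mem _ ⟨i, hi, rfl⟩)).2⟩
  exact hΛ ((hfin x hxX).subset fun γ hγ => hx ⟨γ, hγ⟩)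

/-- Let `X` be a compact subspace of `Σ*([0,1], Γ)`, the set of points `x` of the cube
`[0,1]^Γ` such that `{γ | ε ≤ x γ}` is finite for every `ε > 0`. For fixed `r ∈ (0,1)`,
the family `{V_{r,γ} : γ ∈ Γ}`, where `V_{r,γ} = {x ∈ X | x γ > r}`, is strongly
point-finite: every infinite subfamily contains a finite subfamily with empty
intersection. -/
theorem stmt_11 {Γ : Type*} (X : Set (Γ → ℝ)) (hX : IsCompact X)
    (hsub : ∀ x ∈ X, (∀ γ, x γ ∈ Set.Icc (0 : ℝ) 1) ∧
      ∀ ε : ℝ, 0 < ε → {γ | ε ≤ x γ}.Finite)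
    (r : ℝ) (hr : r ∈ Set.Ioo (0 : ℝ) 1) :
    ∀ μ ⊆ {S : Set (Γ → ℝ) | ∃ γ : Γ, S = {x ∈ X | r < x γ}},
      μ.Infinite → ∃ μ' ⊆ μ, μ'.Finite ∧ ⋂₀ μ' = ∅ := by
  intro μ hμ
  refine stronglyPointFinite_range (fun Λ hΛ => exists_finite_biInter_eq_empty_of_isCompact hX
    (fun x hx => (hsub x hx).2 r hr.1) hΛ) μ fun S hS => ?_
  obtain ⟨γ, rfl⟩ := hμ hS
  exact ⟨γ, rfl⟩
end
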